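/- Let B ∈ ℝ^{N×m} with rank(B) = m and let B⊥ ∈ ℝ^{(N−m)×N} be a full-row-rank matrix with B⊥ B = 0. Let L ∈ ℝ^{2N×2N}, R ∈ ℝ^{N×N}, S ∈ ℝ^{m×N}, and ε > 0, and set M := L Lᵀ + ε I with N×N blocks M₁₁, M₁₂, M₂₁, M₂₂. Then the N×N matrix obtained by stacking B⊥ on top of Bᵀ is invertible, M₁₁ + M₂₂ + R − Rᵀ is invertible, and the matrix A := [B⊥; Bᵀ]⁻¹ · [2 B⊥ (M₁₁ + M₂₂ + R − Rᵀ)⁻¹ M₂₁; S] has the property that the pair (A, B) is stabilizable, i.e., there exists K ∈ ℝ^{m×N} such that A + B K is Schur stable. -/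

import Mathlib

/-!
Over `ℂ`, `M = L Lᵀ + ε I` is positive definite and the skew part `R - Rᵀ` adds only imaginary
numbers to `v* W v`, so `W = M₁₁ + M₂₂ + R - Rᵀ` is invertible. If `2 W⁻¹ M₂₁ v = μ v`
with `v ≠ 0`, then `2 M₂₁ v = μ W v`, and the quadratic form of `M` at `(v, -μ v)` works out to
`(1 - ‖μ‖²) re (v* M₁₁ v) > 0`, whence `‖μ‖ < 1`.

The Gram matrix of `[B⊥; Bᵀ]` is `diag (B⊥ B⊥ᵀ, Bᵀ B)`, so `[B⊥; Bᵀ]` is invertible; since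
`B⊥ B = 0`, the feedback `K = (Bᵀ B)⁻¹ (Bᵀ T - S)` turns `A + B K` into `T = 2 W⁻¹ M₂₁`.
-/

open Matrix

/-- A real square matrix is Schur stable if every complex eigenvalue has modulus < 1. -/
def SchurStable {N : ℕ} (A : Matrix (Fin N) (Fin N) ℝ) : Prop :=
  ∀ μ ∈ spectrum ℂ (A.map Complex.ofReal), ‖μ‖ < 1

/-- The `N × N` matrix obtained by stacking an `(N-m) × N` matrix on top of an `m × N` matrix
(rows reindexed to `Fin N`), assuming `m ≤ N`. -/
noncomputable def stackRows {N m : ℕ} (h : m ≤ N)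
    (X : Matrix (Fin (N - m)) (Fin N) ℝ) (Y : Matrix (Fin m) (Fin N) ℝ) :
    Matrix (Fin N) (Fin N) ℝ :=
  (Matrix.fromRows X Y).submatrix
    ((finCongr (Nat.sub_add_cancel h).symm).trans finSumFinEquiv.symm) id

open scoped ComplexOrder

namespace Matrix

section LinearAlgebra

variable {K m n : Type*} [Field K] [Fintype n] [DecidableEq n]

theorem isUnit_of_rank_eq_card {A : Matrix n n K} (h : A.rank = Fintype.card n) : IsUnit A := by
  have hrange : LinearMap.range A.mulVecLin = ⊤ := by
    apply Submodule.eq_top_of_finrank_eq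
    rw [← rank, h, Module.finrank_fintype_fun_eq_card]
  rw [← mulVec_injective_iff_isUnit]
  exact LinearMap.injective_iff_surjective.mpr (LinearMap.range_eq_top.mp hrange)

variable [LinearOrder K] [IsStrictOrderedRing K]

theorem isUnit_transpose_mul_self_of_rank_eq [Fintype m] {A : Matrix m n K}
    (h : A.rank = Fintype.card n) : IsUnit (Aᵀ * A) :=
  isUnit_of_rank_eq_card (by rw [rank_transpose_mul_self, h])

theorem isUnit_mul_transpose_self_of_rank_eq [Fintype m] {A : Matrix n m K}
    (h : A.rank = Fintype.card n) : IsUnit (A * Aᵀ) :=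
  isUnit_of_rank_eq_card (by rw [rank_self_mul_transpose, h])

end LinearAlgebra

theorem exists_mulVec_eq_smul_of_mem_spectrum {K n : Type*} [Field K] [Fintype n]
    [DecidableEq n] {A : Matrix n n K} {μ : K} (hμ : μ ∈ spectrum K A) :
    ∃ v ≠ 0, A *ᵥ v = μ • v := by
  rw [← spectrum_toLin', ← Module.End.hasEigenvalue_iff_mem_spectrum] at hμ
  obtain ⟨v, hv, hv0⟩ := hμ.exists_hasEigenvector
  exact ⟨v, hv0, by simpa using Module.End.mem_eigenspace_iff.mp hv⟩

theorem star_sumElim_dotProduct_mulVec_sumElim {R m n : Type*} [Fintype m] [Fintype n]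
    [NonUnitalNonAssocSemiring R] [Star R] (M : Matrix (m ⊕ n) (m ⊕ n) R)
    (x : m → R) (y : n → R) :
    star (Sum.elim x y) ⬝ᵥ M *ᵥ Sum.elim x y =
      star x ⬝ᵥ M.toBlocks₁₁ *ᵥ x + star x ⬝ᵥ M.toBlocks₁₂ *ᵥ y +
        (star y ⬝ᵥ M.toBlocks₂₁ *ᵥ x + star y ⬝ᵥ M.toBlocks₂₂ *ᵥ y) := by
  conv_lhs => rw [← fromBlocks_toBlocks M]
  rw [fromBlocks_mulVec, Function.star_sumElim]
  simp [dotProduct_add, add_assoc]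

section RCLike

open RCLike

variable {𝕜 n : Type*} [RCLike 𝕜] [Fintype n]

theorem star_dotProduct_conjTranspose_mulVec (A : Matrix n n 𝕜) (x y : n → 𝕜) :
    star x ⬝ᵥ Aᴴ *ᵥ y = star (star y ⬝ᵥ A *ᵥ x) := by
  rw [dotProduct_mulVec, vecMul_conjTranspose, star_dotProduct, star_star, dotProduct_comm]

theorem re_star_dotProduct_mulVec_self_eq_zero {G : Matrix n n 𝕜} (hG : Gᴴ = -G)
    (x : n → 𝕜) : re (star x ⬝ᵥ G *ᵥ x) = 0 := by
  have h := congrArg re (star_dotProduct_conjTranspose_mulVec G x x)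
  rw [hG, neg_mulVec, dotProduct_neg, map_neg, star_def, conj_re] at h
  linarith

theorem PosDef.isUnit_add_of_conjTranspose_eq_neg [DecidableEq n] {H G : Matrix n n 𝕜}
    (hH : H.PosDef) (hG : Gᴴ = -G) : IsUnit (H + G) := by
  rw [isUnit_iff_isUnit_det, isUnit_iff_ne_zero, Ne, ← exists_mulVec_eq_zero_iff]
  rintro ⟨x, hx, hHGx⟩
  have hpos := (pos_iff.mp (hH.dotProduct_mulVec_pos hx)).1
  have hzero := congrArg (fun w => re (star x ⬝ᵥ w)) hHGx
  simp only [add_mulVec, dotProduct_add, map_add, re_star_dotProduct_mulVec_self_eq_zero hG,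
    dotProduct_zero, map_zero, add_zero] at hzero
  linarith

theorem PosDef.norm_lt_one_of_two_smul_mulVec_eq {M : Matrix (n ⊕ n) (n ⊕ n) 𝕜}
    (hM : M.PosDef) {G : Matrix n n 𝕜} (hG : Gᴴ = -G) {v : n → 𝕜} (hv : v ≠ 0) {μ : 𝕜}
    (h : (2 : 𝕜) • (M.toBlocks₂₁ *ᵥ v) = μ • ((M.toBlocks₁₁ + M.toBlocks₂₂ + G) *ᵥ v)) :
    ‖μ‖ < 1 := by
  set a := star v ⬝ᵥ M.toBlocks₁₁ *ᵥ v
  set c := star v ⬝ᵥ M.toBlocks₂₁ *ᵥ v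
  set d := star v ⬝ᵥ M.toBlocks₂₂ *ᵥ v
  set g := star v ⬝ᵥ G *ᵥ v
  have ha : 0 < re a := (pos_iff.mp ((hM.submatrix Sum.inl_injective).dotProduct_mulVec_pos hv)).1
  have hnorm : star μ * μ = ((‖μ‖ ^ 2 : ℝ) : 𝕜) := by rw [ofReal_pow, star_def, RCLike.conj_mul]
  have hc : 2 * re (star μ * c) = ‖μ‖ ^ 2 * (re a + re d) := by
    have e : ((2 : ℝ) : 𝕜) * (star μ * c) = ((‖μ‖ ^ 2 : ℝ) : 𝕜) * (a + d + g) := by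
      have := congrArg (star v ⬝ᵥ ·) h
      simp only [dotProduct_smul, add_mulVec, dotProduct_add, smul_eq_mul] at this
      rw [← hnorm]
      push_cast
      linear_combination star μ * this
    have := congrArg re e
    rwa [re_ofReal_mul, re_ofReal_mul, map_add, map_add,
      re_star_dotProduct_mulVec_self_eq_zero hG, add_zero] at this
  have h12 : star v ⬝ᵥ M.toBlocks₁₂ *ᵥ v = star c := by
    rw [← star_dotProduct_conjTranspose_mulVec]
    conv_lhs => rw [← hM.1]
    rfl
  have hQ : star (Sum.elim v ((-μ) • v)) ⬝ᵥ M *ᵥ Sum.elim v ((-μ) • v)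
      = a + ((‖μ‖ ^ 2 : ℝ) : 𝕜) * d - (star (star μ * c) + star μ * c) := by
    rw [star_sumElim_dotProduct_mulVec_sumElim, ← hnorm]
    simp only [mulVec_smul, dotProduct_smul, star_smul, smul_dotProduct, smul_eq_mul, h12,
      star_mul', star_star, star_neg]
    ring
  have hz : Sum.elim v ((-μ) • v) ≠ 0 := fun h0 => hv (funext fun i => congrFun h0 (Sum.inl i))
  have hpos := (pos_iff.mp (hM.dotProduct_mulVec_pos hz)).1
  rw [hQ, map_sub, map_add, re_ofReal_mul, map_add, star_def, conj_re, ← star_def] at hpos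
  have : ‖μ‖ ^ 2 < 1 := by nlinarith
  exact (sq_lt_one_iff₀ (norm_nonneg μ)).mp this

end RCLike

section Complexification

theorem isUnit_of_isUnit_map_ofReal {n : Type*} [Fintype n] [DecidableEq n]
    {A : Matrix n n ℝ} (h : IsUnit (A.map Complex.ofReal)) : IsUnit A := by
  have hdet : (A.map Complex.ofReal).det = A.det := (Complex.ofRealHom.map_det A).symm
  rw [isUnit_iff_isUnit_det, hdet, isUnit_iff_ne_zero, Complex.ofReal_ne_zero] at h
  exact (isUnit_iff_isUnit_det A).mpr (isUnit_iff_ne_zero.mpr h)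

theorem conjTranspose_map_ofReal_sub_transpose {n : Type*} (R : Matrix n n ℝ) :
    ((R - Rᵀ).map Complex.ofReal)ᴴ = -(R - Rᵀ).map Complex.ofReal := by
  ext i j
  simp

theorem posDef_map_ofReal_mul_transpose_add_smul_one {n k : Type*} [Fintype n] [Fintype k]
    [DecidableEq n] (L : Matrix n k ℝ) {ε : ℝ} (hε : 0 < ε) :
    ((L * Lᵀ + ε • 1).map Complex.ofReal).PosDef := by
  have : (L * Lᵀ + ε • 1).map Complex.ofReal
      = L.map Complex.ofReal * (L.map Complex.ofReal)ᴴ + ε • 1 := by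
    ext i j
    by_cases hij : i = j <;> simp [Matrix.mul_apply, hij]
  rw [this]
  exact PosDef.posSemidef_add (posSemidef_self_mul_conjTranspose _) (PosDef.one.smul hε)

end Complexification

section Stability

variable {n : Type*} {M : Matrix (n ⊕ n) (n ⊕ n) ℝ}

theorem map_ofReal_toBlocks₁₁_add_toBlocks₂₂_add_sub_transpose (R : Matrix n n ℝ) :
    (M.toBlocks₁₁ + M.toBlocks₂₂ + R - Rᵀ).map Complex.ofReal =
      (M.map Complex.ofReal).toBlocks₁₁ + (M.map Complex.ofReal).toBlocks₂₂ +
        (R - Rᵀ).map Complex.ofReal := by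
  ext i j
  simp [add_sub_assoc, toBlocks₁₁, toBlocks₂₂]

theorem isUnit_toBlocks₁₁_add_toBlocks₂₂_add_sub_transpose [Fintype n] [DecidableEq n]
    (hM : (M.map Complex.ofReal).PosDef) (R : Matrix n n ℝ) :
    IsUnit (M.toBlocks₁₁ + M.toBlocks₂₂ + R - Rᵀ) := by
  apply isUnit_of_isUnit_map_ofReal
  rw [map_ofReal_toBlocks₁₁_add_toBlocks₂₂_add_sub_transpose]
  exact ((hM.submatrix Sum.inl_injective).add (hM.submatrix Sum.inr_injective))
    |>.isUnit_add_of_conjTranspose_eq_neg (conjTranspose_map_ofReal_sub_transpose R)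

end Stability

end Matrix

theorem schurStable_two_smul_inv_mul_toBlocks₂₁ {N : ℕ}
    {M : Matrix (Fin N ⊕ Fin N) (Fin N ⊕ Fin N) ℝ} (hM : (M.map Complex.ofReal).PosDef)
    (R : Matrix (Fin N) (Fin N) ℝ) :
    SchurStable ((2 : ℝ) • ((M.toBlocks₁₁ + M.toBlocks₂₂ + R - Rᵀ)⁻¹ * M.toBlocks₂₁)) := by
  intro μ hμ
  obtain ⟨v, hv, hTv⟩ := exists_mulVec_eq_smul_of_mem_spectrum hμ
  set W := M.toBlocks₁₁ + M.toBlocks₂₂ + R - Rᵀ with hW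
  set T := (2 : ℝ) • (W⁻¹ * M.toBlocks₂₁)
  have hWT : W * T = (2 : ℝ) • M.toBlocks₂₁ := by
    rw [Matrix.mul_smul, mul_nonsing_inv_cancel_left _ _ ((isUnit_iff_isUnit_det W).mp
      (isUnit_toBlocks₁₁_add_toBlocks₂₂_add_sub_transpose hM R))]
  apply hM.norm_lt_one_of_two_smul_mulVec_eq (conjTranspose_map_ofReal_sub_transpose R) hv
  rw [← map_ofReal_toBlocks₁₁_add_toBlocks₂₂_add_sub_transpose, ← hW]
  calc (2 : ℂ) • ((M.map Complex.ofReal).toBlocks₂₁ *ᵥ v)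
      = (((2 : ℝ) • M.toBlocks₂₁).map Complex.ofReal) *ᵥ v := by
        rw [← Matrix.smul_mulVec]; congr 1; ext i j; simp [toBlocks₂₁]
    _ = W.map Complex.ofReal *ᵥ (T.map Complex.ofReal *ᵥ v) := by
        rw [← hWT, mulVec_mulVec]
        exact congrArg (· *ᵥ v) (Matrix.map_mul (f := Complex.ofRealHom))
    _ = μ • (W.map Complex.ofReal *ᵥ v) := by rw [hTv, mulVec_smul]

section StackRows

variable {N m : ℕ} (hm : m ≤ N)

theorem stackRows_mul (X : Matrix (Fin (N - m)) (Fin N) ℝ) (Y : Matrix (Fin m) (Fin N) ℝ)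
    (Z : Matrix (Fin N) (Fin N) ℝ) : stackRows hm X Y * Z = stackRows hm (X * Z) (Y * Z) := by
  rw [stackRows, stackRows, ← fromRows_mul, submatrix_mul _ _ _ id _ Function.bijective_id,
    submatrix_id_id]

theorem stackRows_add (X X' : Matrix (Fin (N - m)) (Fin N) ℝ) (Y Y' : Matrix (Fin m) (Fin N) ℝ) :
    stackRows hm X Y + stackRows hm X' Y' = stackRows hm (X + X') (Y + Y') := by
  have : fromRows X Y + fromRows X' Y' = fromRows (X + X') (Y + Y') := by
    ext (i | i) j <;> rfl
  rw [stackRows, stackRows, stackRows, ← this]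
  rfl

theorem isUnit_stackRows {B : Matrix (Fin N) (Fin m) ℝ} {Bp : Matrix (Fin (N - m)) (Fin N) ℝ}
    (hB : B.rank = m) (hBp : Bp.rank = N - m) (hann : Bp * B = 0) :
    IsUnit (stackRows hm Bp Bᵀ) := by
  set e := (finCongr (Nat.sub_add_cancel hm).symm).trans finSumFinEquiv.symm
  have hgram : stackRows hm Bp Bᵀ * (stackRows hm Bp Bᵀ)ᵀ =
      (fromBlocks (Bp * Bpᵀ) 0 0 (Bᵀ * B)).submatrix e e := by
    rw [stackRows, transpose_submatrix, ← submatrix_mul _ _ _ _ _ Function.bijective_id,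
      transpose_fromRows, fromRows_mul_fromCols, transpose_transpose, hann, ← transpose_mul, hann,
      transpose_zero]
  have hdet : IsUnit (stackRows hm Bp Bᵀ * (stackRows hm Bp Bᵀ)ᵀ).det := by
    rw [hgram, det_submatrix_equiv_self, det_fromBlocks_zero₂₁]
    refine ((isUnit_iff_isUnit_det _).mp ?_).mul ((isUnit_iff_isUnit_det _).mp ?_)
    · exact isUnit_mul_transpose_self_of_rank_eq (by rw [hBp, Fintype.card_fin])
    · exact isUnit_transpose_mul_self_of_rank_eq (by rw [hB, Fintype.card_fin])
  rw [det_mul] at hdet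
  exact (isUnit_iff_isUnit_det _).mpr (isUnit_of_mul_isUnit_left hdet)

theorem exists_inv_stackRows_mul_add_mul_eq {B : Matrix (Fin N) (Fin m) ℝ}
    {Bp : Matrix (Fin (N - m)) (Fin N) ℝ} (hP : IsUnit (stackRows hm Bp Bᵀ))
    (hB : IsUnit (Bᵀ * B)) (hann : Bp * B = 0) (T : Matrix (Fin N) (Fin N) ℝ)
    (S : Matrix (Fin m) (Fin N) ℝ) :
    ∃ K : Matrix (Fin m) (Fin N) ℝ,
      (stackRows hm Bp Bᵀ)⁻¹ * stackRows hm (Bp * T) S + B * K = T := by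
  refine ⟨(Bᵀ * B)⁻¹ * (Bᵀ * T - S), hP.mul_left_cancel ?_⟩
  have hBK : Bᵀ * (B * ((Bᵀ * B)⁻¹ * (Bᵀ * T - S))) = Bᵀ * T - S := by
    rw [← Matrix.mul_assoc, mul_nonsing_inv_cancel_left _ _ ((isUnit_iff_isUnit_det _).mp hB)]
  rw [Matrix.mul_add, mul_nonsing_inv_cancel_left _ _ ((isUnit_iff_isUnit_det _).mp hP),
    stackRows_mul, stackRows_mul, stackRows_add, ← Matrix.mul_assoc Bp, hann, Matrix.zero_mul,
    add_zero, hBK, add_sub_cancel]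

end StackRows

theorem stmt13 {N m : ℕ} (hm : m ≤ N)
    (B : Matrix (Fin N) (Fin m) ℝ) (hB : B.rank = m)
    (Bp : Matrix (Fin (N - m)) (Fin N) ℝ) (hBp : Bp.rank = N - m)
    (hann : Bp * B = 0)
    (L : Matrix (Fin N ⊕ Fin N) (Fin N ⊕ Fin N) ℝ)
    (R : Matrix (Fin N) (Fin N) ℝ) (S : Matrix (Fin m) (Fin N) ℝ)
    (ε : ℝ) (hε : 0 < ε)
    (M : Matrix (Fin N ⊕ Fin N) (Fin N ⊕ Fin N) ℝ)
    (hM : M = L * Lᵀ + ε • (1 : Matrix (Fin N ⊕ Fin N) (Fin N ⊕ Fin N) ℝ)) :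
    IsUnit (stackRows hm Bp Bᵀ) ∧
    IsUnit (M.toBlocks₁₁ + M.toBlocks₂₂ + R - Rᵀ) ∧
    ∃ K : Matrix (Fin m) (Fin N) ℝ,
      SchurStable ((stackRows hm Bp Bᵀ)⁻¹ *
          stackRows hm
            ((2 : ℝ) • (Bp * ((M.toBlocks₁₁ + M.toBlocks₂₂ + R - Rᵀ)⁻¹ * M.toBlocks₂₁))) S
        + B * K) := by
  have hMc : (M.map Complex.ofReal).PosDef := hM ▸ posDef_map_ofReal_mul_transpose_add_smul_one L hε
  have hP : IsUnit (stackRows hm Bp Bᵀ) := isUnit_stackRows hm hB hBp hann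
  refine ⟨hP, isUnit_toBlocks₁₁_add_toBlocks₂₂_add_sub_transpose hMc R, ?_⟩
  have hBtB : IsUnit (Bᵀ * B) :=
    isUnit_transpose_mul_self_of_rank_eq (by rw [hB, Fintype.card_fin])
  obtain ⟨K, hK⟩ := exists_inv_stackRows_mul_add_mul_eq hm hP hBtB hann
    ((2 : ℝ) • ((M.toBlocks₁₁ + M.toBlocks₂₂ + R - Rᵀ)⁻¹ * M.toBlocks₂₁)) S
  refine ⟨K, ?_⟩
  rw [← Matrix.mul_smul, hK]
  exact schurStable_two_smul_inv_mul_toBlocks₂₁ hMc R
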